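/- arXiv:1411.0501 — 3 statements merged into one kernel-verified Lean document; each statement's English description precedes it below -/
import Mathlib

section
/- Explicit binomial call price: in the binomial market, C(k,x) = x·Bin(j; N-k, q̃) - R^{k-N}·K·Bin(j; N-k, q), where j = ⌈(log(K/x) - (N-k)·log d)/log(u/d)⌉, q = (R-d)/(u-d), q̃ = (u/R)·q, and Bin(j; n, p) = ∑_{i=j}^n C(n,i)·p^i·(1-p)^{n-i}. -/
open Finset

/-- Explicit binomial call price:
`C(k,x) = x·Bin(j; N-k, q̃) - R^{k-N}·K·Bin(j; N-k, q)` with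
`j = ⌈(log(K/x) - (N-k) log d)/log(u/d)⌉`, `q = (R-d)/(u-d)`, `q̃ = (u/R)q`. -/
theorem stmt13 (u d R K x : ℝ) (hd : 0 < d) (hdR : d < R) (hRu : R < u)
    (hd1 : d < 1) (h1u : 1 < u) (hK : 0 < K) (hx : 0 < x)
    (N k : ℕ) (hk : k ≤ N) (q qt : ℝ) (j : ℤ)
    (hq : q = (R - d) / (u - d)) (hqt : qt = (u / R) * q)
    (hj : j = ⌈(Real.log (K / x) - ((N - k : ℕ) : ℝ) * Real.log d)
        / Real.log (u / d)⌉)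
    (Bin : ℤ → ℕ → ℝ → ℝ)
    (hBin : ∀ (j' : ℤ) (n : ℕ) (p : ℝ), Bin j' n p
      = ∑ i ∈ range (n + 1),
          if j' ≤ (i : ℤ) then (n.choose i : ℝ) * p ^ i * (1 - p) ^ (n - i)
          else 0) :
    R ^ ((k : ℤ) - (N : ℤ)) *
      ∑ i ∈ range (N - k + 1),
        ((N - k).choose i : ℝ) * q ^ i * (1 - q) ^ (N - k - i)
          * max (x * u ^ i * d ^ (N - k - i) - K) 0
    = x * Bin j (N - k) qt - R ^ ((k : ℤ) - (N : ℤ)) * K * Bin j (N - k) q := by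

  have hR0 : (0:ℝ) < R := lt_trans hd hdR
  have hu0 : (0:ℝ) < u := lt_trans hR0 hRu
  set n := N - k with hn
  have hzp : R ^ ((k : ℤ) - (N : ℤ)) = (R ^ n)⁻¹ := by
    have : (k : ℤ) - (N : ℤ) = -(n : ℤ) := by
      simp [hn, Nat.cast_sub hk]
    rw [this, zpow_neg, zpow_natCast]
  have hud : (1:ℝ) < u / d := (one_lt_div hd).2 (by linarith)
  have hlud : 0 < Real.log (u / d) := Real.log_pos hud
  have key : ∀ i : ℕ, i ≤ n → (j ≤ (i : ℤ) ↔ K ≤ x * u ^ i * d ^ (n - i)) := by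
    intro i hi
    have hni : ((n - i : ℕ) : ℝ) = (n : ℝ) - i := by
      push_cast [Nat.cast_sub hi]; ring
    rw [hj, Int.ceil_le]
    push_cast
    rw [div_le_iff₀ hlud]
    have hS : 0 < x * u ^ i * d ^ (n - i) := by positivity
    have hlog : K ≤ x * u ^ i * d ^ (n - i) ↔
        Real.log K ≤ Real.log (x * u ^ i * d ^ (n - i)) :=
      (Real.log_le_log_iff hK hS).symm
    rw [hlog, Real.log_mul (by positivity) (by positivity),
      Real.log_mul (by positivity) (by positivity),
      Real.log_pow, Real.log_pow, Real.log_div (ne_of_gt hK) (ne_of_gt hx),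
      Real.log_div (ne_of_gt hu0) (ne_of_gt hd), hni]
    constructor <;> intro h <;> nlinarith [h]
  have hqne : u - d ≠ 0 := by intro h; nlinarith
  have h1q : 1 - qt = d * (1 - q) / R := by
    rw [hqt, hq]; field_simp; ring
  rw [hzp, hBin, hBin, Finset.mul_sum, Finset.mul_sum,
    Finset.mul_sum, ← Finset.sum_sub_distrib]
  refine Finset.sum_congr rfl ?_
  intro i hi
  have hi' : i ≤ n := by
    have := Finset.mem_range.mp hi; omega
  by_cases hji : j ≤ (i : ℤ)
  · have hKS : K ≤ x * u ^ i * d ^ (n - i) := (key i hi').mp hji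
    rw [if_pos hji, if_pos hji, max_eq_left (by linarith)]
    have hpow : R ^ i * R ^ (n - i) = R ^ n := by
      rw [← pow_add]; congr 1; omega
    rw [h1q, hqt]
    have e : (u / R * q) ^ i * (d * (1 - q) / R) ^ (n - i)
        = u ^ i * q ^ i * (d ^ (n - i) * (1 - q) ^ (n - i)) * (R ^ n)⁻¹ := by
      simp only [mul_pow, div_pow]
      rw [div_mul_eq_mul_div, div_mul_div_comm, hpow, div_eq_mul_inv]
    conv_rhs => rw [mul_assoc ((n.choose i : ℝ)), e]
    generalize q ^ i = A
    generalize (1 - q) ^ (n - i) = B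
    generalize u ^ i = U
    generalize d ^ (n - i) = D
    generalize (R ^ n)⁻¹ = E
    ring
  · have hSK : ¬ K ≤ x * u ^ i * d ^ (n - i) := fun h => hji ((key i hi').mpr h)
    rw [if_neg hji, if_neg hji, max_eq_right (by push_neg at hSK; linarith)]
    ring
end

section
/- Hedge-ratio approximation: with a(k,x) := (f(k+1, u·x) - f(k+1, d·x))/((u-d)·x) (the binomial delta), if g ∈ C² with M := sup|g''| < ∞, then |a(k,x) - ∂_x f(k+1, x)| ≤ M·ξ̄·Q^{N-k-1}, where ξ̄ := max(|u-1|,|1-d|)·x bounds |ξ - x| for the mean-value point ξ ∈ (dx, ux), and Q := q·u²/R + (1-q)·d²/R, with q = (R-d)/(u-d). -/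
/-!
Write `f (k+1) x = R^{-m} ∑ᵢ wᵢ g(x cᵢ)` with `m = N-k-1`, binomial weights `wᵢ ≥ 0` and nodes
`cᵢ = uⁱ d^{m-i}`. Termwise, the slope of `x ↦ g(x cᵢ)` over `[dx, ux]` differs from its derivative
by `cᵢ (g'(ξᵢ) - g'(x cᵢ))` for a mean-value point `ξᵢ` with `|ξᵢ - x cᵢ| ≤ ξ̄ cᵢ`, and `g'` is
`M`-Lipschitz. Summing gives the bound `M ξ̄ R^{-m} ∑ᵢ wᵢ cᵢ²`, and the binomial theorem evaluates
`∑ᵢ wᵢ cᵢ² = (q u² + (1-q) d²)^m`.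
-/

open Finset

lemma abs_deriv_sub_deriv_le_of_abs_iteratedDeriv_two_le {g : ℝ → ℝ} {M : ℝ}
    (hg : ContDiff ℝ 2 g) (hM : ∀ s, |iteratedDeriv 2 g s| ≤ M) (s t : ℝ) :
    |deriv g s - deriv g t| ≤ M * |s - t| := by
  have hg' : Differentiable ℝ (deriv g) :=
    (((contDiff_succ_iff_deriv (n := 1)).mp hg).2.2).differentiable one_ne_zero
  have hg'' : ∀ y, ‖deriv (deriv g) y‖ ≤ M := fun y => by
    simpa [iteratedDeriv_succ, iteratedDeriv_one] using hM y
  simpa [Real.norm_eq_abs] using Convex.norm_image_sub_le_of_norm_deriv_le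
    (fun y _ => hg' y) (fun y _ => hg'' y) convex_univ (Set.mem_univ t) (Set.mem_univ s)

lemma abs_slope_sub_deriv_le {g : ℝ → ℝ} {M u d y : ℝ} (hg : Differentiable ℝ g)
    (hg' : ∀ s t, |deriv g s - deriv g t| ≤ M * |s - t|) (hdu : d < u) (hy : 0 < y) :
    |(g (u * y) - g (d * y)) / ((u - d) * y) - deriv g y| ≤ M * (max |u - 1| |1 - d| * y) := by
  obtain ⟨ξ, ⟨hξd, hξu⟩, hslope⟩ := exists_hasDerivAt_eq_slope g (deriv g)
    (mul_lt_mul_of_pos_right hdu hy) hg.continuous.continuousOn fun s _ => (hg s).hasDerivAt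
  have hM : 0 ≤ M := by simpa using (abs_nonneg _).trans (hg' 1 0)
  have hξ : |ξ - y| ≤ max |u - 1| |1 - d| * y := by
    have := le_max_left |u - 1| |1 - d|
    have := le_max_right |u - 1| |1 - d|
    rw [abs_le]
    constructor <;> nlinarith [le_abs_self (u - 1), le_abs_self (1 - d)]
  calc |(g (u * y) - g (d * y)) / ((u - d) * y) - deriv g y| = |deriv g ξ - deriv g y| := by
        rw [hslope, sub_mul]
    _ ≤ M * |ξ - y| := hg' ξ y
    _ ≤ M * (max |u - 1| |1 - d| * y) := mul_le_mul_of_nonneg_left hξ hM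

lemma hasDerivAt_sum_mul_comp_mul {ι : Type*} (s : Finset ι) (w c : ι → ℝ) {g : ℝ → ℝ}
    (hg : Differentiable ℝ g) (x : ℝ) :
    HasDerivAt (fun y => ∑ i ∈ s, w i * g (y * c i))
      (∑ i ∈ s, w i * (deriv g (x * c i) * c i)) x :=
  HasDerivAt.fun_sum fun i _ => by
    simpa using ((hg _).hasDerivAt.comp x ((hasDerivAt_id x).mul_const (c i))).const_mul (w i)

lemma abs_slope_sub_deriv_sum_le {ι : Type*} (s : Finset ι) {w c : ι → ℝ}
    (hw : ∀ i ∈ s, 0 ≤ w i) (hc : ∀ i ∈ s, 0 < c i) {g F : ℝ → ℝ} {M u d x : ℝ}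
    (hg : Differentiable ℝ g) (hg' : ∀ s t, |deriv g s - deriv g t| ≤ M * |s - t|)
    (hdu : d < u) (hx : 0 < x) (hF : ∀ y, F y = ∑ i ∈ s, w i * g (y * c i)) :
    |(F (u * x) - F (d * x)) / ((u - d) * x) - deriv F x|
      ≤ M * (max |u - 1| |1 - d| * x) * ∑ i ∈ s, w i * c i ^ 2 := by
  have hderiv : deriv F x = ∑ i ∈ s, w i * (deriv g (x * c i) * c i) := by
    rw [funext hF]
    exact (hasDerivAt_sum_mul_comp_mul s w c hg x).deriv
  have hsplit : (F (u * x) - F (d * x)) / ((u - d) * x) - deriv F x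
      = ∑ i ∈ s, w i * c i * ((g (u * (x * c i)) - g (d * (x * c i))) / ((u - d) * (x * c i))
          - deriv g (x * c i)) := by
    rw [hF, hF, hderiv, ← sum_sub_distrib, sum_div, ← sum_sub_distrib]
    refine sum_congr rfl fun i hi => ?_
    have := (hc i hi).ne'
    have : u - d ≠ 0 := by linarith
    field_simp
  rw [hsplit, mul_sum]
  refine (abs_sum_le_sum_abs _ _).trans (sum_le_sum fun i hi => ?_)
  have hwc : 0 ≤ w i * c i := mul_nonneg (hw i hi) (hc i hi).le
  rw [abs_mul, abs_of_nonneg hwc]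
  calc w i * c i * |_| ≤ w i * c i * (M * (max |u - 1| |1 - d| * (x * c i))) :=
        mul_le_mul_of_nonneg_left (abs_slope_sub_deriv_le hg hg' hdu (mul_pos hx (hc i hi))) hwc
    _ = M * (max |u - 1| |1 - d| * x) * (w i * c i ^ 2) := by ring

lemma sum_choose_mul_pow_mul_pow_mul_sq (a b u d : ℝ) (m : ℕ) :
    ∑ i ∈ range (m + 1), (m.choose i : ℝ) * a ^ i * b ^ (m - i) * (u ^ i * d ^ (m - i)) ^ 2
      = (a * u ^ 2 + b * d ^ 2) ^ m := by
  rw [add_pow]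
  refine sum_congr rfl fun i _ => ?_
  ring

/-- Hedge-ratio approximation: with the binomial delta
`a(k,x) = (f(k+1,ux) - f(k+1,dx))/((u-d)x)`, if `g ∈ C²` with `|g''| ≤ M`,
then `|a(k,x) - ∂ₓ f(k+1,x)| ≤ M·ξ̄·Q^{N-k-1}` where
`ξ̄ = max(|u-1|,|1-d|)·x` and `Q = q u²/R + (1-q) d²/R`. -/
theorem stmt16 (u d R : ℝ) (hd : 0 < d) (hdR : d < R) (hRu : R < u)
    (q : ℝ) (hq : q = (R - d) / (u - d)) (N k : ℕ) (hk : k < N)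
    (g : ℝ → ℝ) (hg : ContDiff ℝ 2 g) (M : ℝ)
    (hM : ∀ s, |iteratedDeriv 2 g s| ≤ M)
    (f : ℕ → ℝ → ℝ)
    (hf : ∀ (k' : ℕ) (x : ℝ), f k' x = R ^ ((k' : ℤ) - (N : ℤ)) *
      ∑ i ∈ range (N - k' + 1),
        ((N - k').choose i : ℝ) * q ^ i * (1 - q) ^ (N - k' - i)
          * g (x * u ^ i * d ^ (N - k' - i)))
    (x : ℝ) (hx : 0 < x) :
    |(f (k+1) (u * x) - f (k+1) (d * x)) / ((u - d) * x)
        - deriv (f (k+1)) x|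
      ≤ M * (max |u - 1| |1 - d| * x)
          * (q * u ^ 2 / R + (1 - q) * d ^ 2 / R) ^ (N - k - 1) := by
  have hR : 0 < R := hd.trans hdR
  have hu : 0 < u := hR.trans hRu
  have hq0 : 0 ≤ q := hq ▸ div_nonneg (by linarith) (by linarith)
  have hq1 : 0 ≤ 1 - q := by rw [hq, sub_nonneg, div_le_one (by linarith)]; linarith
  obtain ⟨m, hm, hNk⟩ : ∃ m, N - (k + 1) = m ∧ N - k - 1 = m := ⟨_, rfl, by omega⟩
  have hRm : R ^ (((k + 1 : ℕ) : ℤ) - N) = (R ^ m)⁻¹ := by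
    rw [show ((k + 1 : ℕ) : ℤ) - N = -(m : ℤ) by omega, zpow_neg, zpow_natCast]
  have hprice : ∀ y, f (k + 1) y = ∑ i ∈ range (m + 1),
      (R ^ m)⁻¹ * ((m.choose i : ℝ) * q ^ i * (1 - q) ^ (m - i)) * g (y * (u ^ i * d ^ (m - i))) := by
    intro y
    rw [hf, hm, hRm, mul_sum]
    simp only [mul_assoc]
  have hw : ∀ i ∈ range (m + 1), 0 ≤ (R ^ m)⁻¹ * ((m.choose i : ℝ) * q ^ i * (1 - q) ^ (m - i)) :=
    fun i _ => by have := pow_nonneg hq1 (m - i); positivity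
  refine (abs_slope_sub_deriv_sum_le _ hw (fun i _ => by positivity)
    (hg.differentiable two_ne_zero)
    (abs_deriv_sub_deriv_le_of_abs_iteratedDeriv_two_le hg hM) (by linarith) hx hprice).trans_eq ?_
  simp only [mul_assoc (R ^ m)⁻¹, ← mul_sum, sum_choose_mul_pow_mul_pow_mul_sq, hNk]
  rw [← add_div, div_pow]
  ring
end

section
/- Discrete Feynman–Kac (forward): for fixed m, the functional f_m(t_k, x) := E^x[exp(-∑_{i=0}^{k-1} r(S_m(t_i))·Δt)·g(S_m(t_k))], where S_m satisfies ΔS_m(t_{k+1}) = μ(S_m(t_k))Δt + σ(S_m(t_k))ΔB_m(t_{k+1}) with symmetric ±Δx steps, is the unique solution of f_m(t_{k+1},x) = (1/2)·e^{-r(x)Δt}·(f_m(t_k, x⁺) + f_m(t_k, x⁻)) with initial condition f_m(0,x) = g(x), where x^± = x + μ(x)Δt ± σ(x)Δx. -/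
open Finset

/-- The discrete Itô path started at `x`, driven by the sign sequence `ε`:
`S(k+1) = S(k) + μ(S(k))Δt + σ(S(k))·(±Δx)`. -/
noncomputable def itoPath (μf σf : ℝ → ℝ) (Δt Δx : ℝ) (x : ℝ)
    (ε : ℕ → Bool) : ℕ → ℝ
  | 0 => x
  | k + 1 => itoPath μf σf Δt Δx x ε k
      + μf (itoPath μf σf Δt Δx x ε k) * Δt
      + σf (itoPath μf σf Δt Δx x ε k) * (if ε k then Δx else -Δx)

lemma itoPath_succ (μf σf : ℝ → ℝ) (Δt Δx x : ℝ) (ε : ℕ → Bool) (k : ℕ) :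
    itoPath μf σf Δt Δx x ε (k+1) = itoPath μf σf Δt Δx x ε k
      + μf (itoPath μf σf Δt Δx x ε k) * Δt
      + σf (itoPath μf σf Δt Δx x ε k) * (if ε k then Δx else -Δx) := rfl

lemma itoPath_shift (μf σf : ℝ → ℝ) (Δt Δx x : ℝ) (ε : ℕ → Bool) (j : ℕ) :
    itoPath μf σf Δt Δx x ε (j+1) =
      itoPath μf σf Δt Δx
        (x + μf x * Δt + σf x * (if ε 0 then Δx else -Δx))
        (fun i => ε (i+1)) j := by
  induction j with
  | zero => rfl
  | succ j ih => rw [itoPath_succ _ _ _ _ _ (fun i => ε (i+1)) j, ← ih]; exact itoPath_succ _ _ _ _ _ _ _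

/-- Discrete Feynman–Kac (forward): for fixed `m`, the functional
`f_m(t_k,x) = E^x[exp(-∑_{i<k} r(S_m(t_i))Δt) g(S_m(t_k))]` (the expectation
being the average over the `2^k` equally likely ±Δx sign paths) is the unique
solution of
`f_m(t_{k+1},x) = ½ e^{-r(x)Δt}(f_m(t_k,x⁺) + f_m(t_k,x⁻))`, `f_m(0,x) = g(x)`,
where `x^± = x + μ(x)Δt ± σ(x)Δx`. -/
theorem stmt18 (m : ℕ) (μf σf r g : ℝ → ℝ)
    (hμ : Continuous μf) (hσc : Continuous σf) (hσ : ∀ x, 0 < σf x)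
    (hr : Continuous r) (hgc : Continuous g)
    (Δt Δx : ℝ) (hΔt : Δt = (2:ℝ)^(-(2*m:ℤ))) (hΔx : Δx = (2:ℝ)^(-(m:ℤ)))
    (F : ℕ → ℝ → ℝ)
    (hF : ∀ (k : ℕ) (x : ℝ), F k x = ((2:ℝ)^k)⁻¹ *
      ∑ ε : Fin k → Bool,
        Real.exp (-(∑ i ∈ range k,
            r (itoPath μf σf Δt Δx x
                (fun j => if h : j < k then ε ⟨j, h⟩ else true) i) * Δt))
          * g (itoPath μf σf Δt Δx x
                (fun j => if h : j < k then ε ⟨j, h⟩ else true) k)) :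
    (∀ x, F 0 x = g x) ∧
    (∀ (k : ℕ) (x : ℝ), F (k+1) x = (1/2) * Real.exp (-(r x * Δt)) *
        (F k (x + μf x * Δt + σf x * Δx) + F k (x + μf x * Δt - σf x * Δx))) ∧
    (∀ G : ℕ → ℝ → ℝ, (∀ x, G 0 x = g x) →
      (∀ (k : ℕ) (x : ℝ), G (k+1) x = (1/2) * Real.exp (-(r x * Δt)) *
          (G k (x + μf x * Δt + σf x * Δx) + G k (x + μf x * Δt - σf x * Δx))) →
      G = F) := by
  have h0 : ∀ x, F 0 x = g x := by
    intro x
    rw [hF]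
    simp [itoPath]
  have hrec : ∀ (k : ℕ) (x : ℝ), F (k+1) x = (1/2) * Real.exp (-(r x * Δt)) *
      (F k (x + μf x * Δt + σf x * Δx) + F k (x + μf x * Δt - σf x * Δx)) := by
    intro k x
    -- summand as a function of starting point and sign vector
    set T : ℝ → (Fin k → Bool) → ℝ := fun y δ =>
      Real.exp (-(∑ i ∈ range k,
          r (itoPath μf σf Δt Δx y
              (fun j => if h : j < k then δ ⟨j, h⟩ else true) i) * Δt))
        * g (itoPath μf σf Δt Δx y
              (fun j => if h : j < k then δ ⟨j, h⟩ else true) k) with hT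
    have key : ∀ ε : Fin (k+1) → Bool,
        Real.exp (-(∑ i ∈ range (k+1),
            r (itoPath μf σf Δt Δx x
                (fun j => if h : j < k+1 then ε ⟨j, h⟩ else true) i) * Δt))
          * g (itoPath μf σf Δt Δx x
                (fun j => if h : j < k+1 then ε ⟨j, h⟩ else true) (k+1))
        = Real.exp (-(r x * Δt)) *
            (if ε 0 then T (x + μf x * Δt + σf x * Δx) (Fin.tail ε)
             else T (x + μf x * Δt - σf x * Δx) (Fin.tail ε)) := by
      intro ε
      set e : ℕ → Bool := fun j => if h : j < k+1 then ε ⟨j, h⟩ else true with he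
      have he0 : e 0 = ε 0 := by simp [he]
      have hshiftfun : (fun i => e (i+1)) =
          (fun j => if h : j < k then (Fin.tail ε) ⟨j, h⟩ else true) := by
        funext i
        by_cases h : i < k
        · simp [he, h, Nat.succ_lt_succ h, Fin.tail]
        · simp [he, h, Nat.succ_lt_succ_iff]
      have hx : (x + μf x * Δt + σf x * (if e 0 then Δx else -Δx)) =
          (if ε 0 then x + μf x * Δt + σf x * Δx
           else x + μf x * Δt - σf x * Δx) := by
        rw [he0]; by_cases h : ε 0 <;> simp [h] <;> ring
      have hpath : ∀ i, itoPath μf σf Δt Δx x e (i+1) =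
          itoPath μf σf Δt Δx
            (if ε 0 then x + μf x * Δt + σf x * Δx
             else x + μf x * Δt - σf x * Δx)
            (fun j => if h : j < k then (Fin.tail ε) ⟨j, h⟩ else true) i := by
        intro i
        rw [itoPath_shift, hx, hshiftfun]
      have hsum : ∑ i ∈ range (k+1), r (itoPath μf σf Δt Δx x e i) * Δt =
          r x * Δt + ∑ i ∈ range k,
            r (itoPath μf σf Δt Δx
                (if ε 0 then x + μf x * Δt + σf x * Δx
                 else x + μf x * Δt - σf x * Δx)
                (fun j => if h : j < k then (Fin.tail ε) ⟨j, h⟩ else true) i) * Δt := by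
        rw [Finset.sum_range_succ']
        have : itoPath μf σf Δt Δx x e 0 = x := rfl
        rw [this, add_comm]
        congr 1
        exact Finset.sum_congr rfl (fun i _ => by rw [hpath i])
      rw [hsum, hpath k, hT]
      cases h : ε 0 with
      | true =>
          simp only [h, if_true]
          rw [neg_add, Real.exp_add, mul_assoc]
      | false =>
          simp only [h, Bool.false_eq_true, if_false]
          rw [neg_add, Real.exp_add, mul_assoc]
    rw [hF (k+1) x, hF k _, hF k _]
    calc ((2:ℝ)^(k+1))⁻¹ *
        ∑ ε : Fin (k+1) → Bool,
          Real.exp (-(∑ i ∈ range (k+1),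
              r (itoPath μf σf Δt Δx x
                  (fun j => if h : j < k+1 then ε ⟨j, h⟩ else true) i) * Δt))
            * g (itoPath μf σf Δt Δx x
                  (fun j => if h : j < k+1 then ε ⟨j, h⟩ else true) (k+1))
        = ((2:ℝ)^(k+1))⁻¹ * ∑ ε : Fin (k+1) → Bool,
            Real.exp (-(r x * Δt)) *
              (if ε 0 then T (x + μf x * Δt + σf x * Δx) (Fin.tail ε)
               else T (x + μf x * Δt - σf x * Δx) (Fin.tail ε)) := by
          rw [Finset.sum_congr rfl (fun ε _ => key ε)]
      _ = ((2:ℝ)^(k+1))⁻¹ * Real.exp (-(r x * Δt)) *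
            ((∑ δ : Fin k → Bool, T (x + μf x * Δt + σf x * Δx) δ) +
             (∑ δ : Fin k → Bool, T (x + μf x * Δt - σf x * Δx) δ)) := by
          rw [← Finset.mul_sum, ← mul_assoc]
          congr 1
          rw [← Equiv.sum_comp (Fin.consEquiv (fun _ : Fin (k+1) => Bool))]
          have hc : ∀ (p : Bool × (Fin k → Bool)),
              (Fin.consEquiv (fun _ : Fin (k+1) => Bool)) p = Fin.cons p.1 p.2 :=
            fun _ => rfl
          simp only [hc, Fin.cons_zero, Fin.tail_cons]
          rw [Fintype.sum_prod_type, Fintype.sum_bool]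
          simp only [eq_self_iff_true, if_true, Bool.false_eq_true, if_false]
      _ = _ := by
          rw [pow_succ]
          rw [mul_inv]
          ring
  refine ⟨h0, hrec, ?_⟩
  intro G hG0 hGrec
  funext k x
  induction k generalizing x with
  | zero => rw [hG0, h0]
  | succ k ih => rw [hGrec, hrec, ih, ih]
end
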